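/- arXiv:1707.04187 — 2 statements merged into one kernel-verified Lean document; each statement's English description precedes it below -/
import Mathlib

section
/- Let A be a group acting by automorphisms on a group G. If A is generated by elements a_1, ..., a_k, then the commutator subgroup [G, A] equals the product of the subgroups [G, a_1] ⋯ [G, a_k]. -/
open Pointwise

/-- The subgroup `[G, a]` generated by all `x⁻¹ * (a x)` for an automorphism `a` of `G`. -/
def autComm {G : Type*} [Group G] (a : MulAut G) : Subgroup G :=
  Subgroup.closure {y | ∃ x : G, x⁻¹ * a x = y}

/-- The subgroup `[G, A]` for a group `A` acting by automorphisms on `G` via `φ`. -/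
def autCommGroup {G A : Type*} [Group G] [Group A] (φ : A →* MulAut G) : Subgroup G :=
  Subgroup.closure {y | ∃ a : A, ∃ x : G, x⁻¹ * φ a x = y}

theorem autComm_normal {G : Type*} [Group G] (a : MulAut G) : (autComm a).Normal := by
  constructor
  intro n hn g
  have key : ∀ n, n ∈ autComm a → ∀ g : G, g * n * g⁻¹ ∈ autComm a := by
    intro n hn
    refine Subgroup.closure_induction ?_ ?_ ?_ ?_ hn
    · rintro s ⟨x, rfl⟩ g
      have h1 : (x * g⁻¹)⁻¹ * a (x * g⁻¹) ∈ autComm a :=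
        Subgroup.subset_closure ⟨x * g⁻¹, rfl⟩
      have h2 : ((g⁻¹)⁻¹ * a g⁻¹)⁻¹ ∈ autComm a :=
        (autComm a).inv_mem (Subgroup.subset_closure ⟨g⁻¹, rfl⟩)
      have := (autComm a).mul_mem h1 h2
      have heq : (x * g⁻¹)⁻¹ * a (x * g⁻¹) * ((g⁻¹)⁻¹ * a g⁻¹)⁻¹
          = g * (x⁻¹ * a x) * g⁻¹ := by
        simp [map_mul, map_inv, mul_assoc]
      rwa [heq] at this
    · intro g; simpa using (autComm a).one_mem
    · intro m n _ _ hm hn g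
      have := (autComm a).mul_mem (hm g) (hn g)
      simpa [mul_assoc] using this
    · intro m _ hm g
      have := (autComm a).inv_mem (hm g)
      simpa [mul_assoc] using this
  exact key n hn g

theorem iSup_normal {G : Type*} [Group G] {ι : Sort*} (f : ι → Subgroup G)
    (h : ∀ i, (f i).Normal) : (⨆ i, f i).Normal := by
  constructor
  intro n hn g
  refine Subgroup.iSup_induction f (C := fun x => g * x * g⁻¹ ∈ ⨆ i, f i) hn ?_ ?_ ?_
  · intro i x hx
    exact Subgroup.mem_iSup_of_mem i ((h i).conj_mem x hx g)
  · simpa using (⨆ i, f i).one_mem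
  · intro x y hx hy
    have := (⨆ i, f i).mul_mem hx hy
    simpa [mul_assoc] using this

theorem prod_ofFn_eq_iSup {G : Type*} [Group G] : ∀ (k : ℕ) (f : Fin k → Subgroup G),
    (∀ i, (f i).Normal) →
    (List.ofFn (fun i => ((f i : Subgroup G) : Set G))).prod = ↑(⨆ i, f i) := by
  intro k
  induction k with
  | zero =>
    intro f _
    simp [iSup_of_empty]
    rfl
  | succ n ih =>
    intro f hf
    have hiSup : ⨆ i, f i = f 0 ⊔ ⨆ i : Fin n, f i.succ := by
      apply le_antisymm
      · exact iSup_le fun i => Fin.cases le_sup_left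
          (fun j => le_trans (le_iSup (fun i : Fin n => f i.succ) j) le_sup_right) i
      · exact sup_le (le_iSup f 0) (iSup_le fun j => le_iSup f j.succ)
    have hN : (⨆ i : Fin n, f i.succ).Normal := iSup_normal _ fun i => hf i.succ
    rw [List.ofFn_succ, List.prod_cons, ih (fun i => f i.succ) (fun i => hf i.succ),
      hiSup, Subgroup.mul_normal]

/-- If `A = ⟨a 1, …, a k⟩` acts on `G` by automorphisms, then
`[G, A] = [G, a 1] ⋯ [G, a k]` (product of subsets of `G`). -/
theorem stmt0 {G A : Type*} [Group G] [Group A] (φ : A →* MulAut G)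
    (k : ℕ) (a : Fin k → A)
    (hgen : Subgroup.closure (Set.range a) = (⊤ : Subgroup A)) :
    (autCommGroup φ : Set G) = (List.ofFn (fun i => (autComm (φ (a i)) : Set G))).prod := by
  rw [prod_ofFn_eq_iSup k (fun i => autComm (φ (a i))) (fun i => autComm_normal _)]
  suffices h : autCommGroup φ = ⨆ i, autComm (φ (a i)) by rw [h]
  apply le_antisymm
  · -- autCommGroup ≤ ⨆
    set N := ⨆ i, autComm (φ (a i)) with hNdef
    rw [autCommGroup, Subgroup.closure_le]
    rintro y ⟨b, x, rfl⟩
    -- the set of b such that all commutators land in N is a subgroup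
    let S : Subgroup A :=
      { carrier := {b | ∀ x : G, x⁻¹ * φ b x ∈ N}
        one_mem' := by intro x; simpa using N.one_mem
        mul_mem' := by
          intro b c hb hc x
          have h1 : x⁻¹ * φ c x ∈ N := hc x
          have h2 : (φ c x)⁻¹ * φ b (φ c x) ∈ N := hb (φ c x)
          have := N.mul_mem h1 h2
          simpa [map_mul, mul_assoc] using this
        inv_mem' := by
          intro b hb x
          have h1 : (φ b⁻¹ x)⁻¹ * φ b (φ b⁻¹ x) ∈ N := hb (φ b⁻¹ x)
          have := N.inv_mem h1
          have heq : ((φ b⁻¹ x)⁻¹ * φ b (φ b⁻¹ x))⁻¹ = x⁻¹ * φ b⁻¹ x := by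
            have : φ b (φ b⁻¹ x) = x := by
              rw [← MulAut.mul_apply, ← map_mul, mul_inv_cancel, map_one]; rfl
            rw [this]; group
          rwa [heq] at this }
    have hS : ∀ b : A, b ∈ S := by
      intro b
      have : Subgroup.closure (Set.range a) ≤ S := by
        rw [Subgroup.closure_le]
        rintro _ ⟨i, rfl⟩ x
        exact Subgroup.mem_iSup_of_mem i (Subgroup.subset_closure ⟨x, rfl⟩)
      rw [hgen] at this
      exact this (Subgroup.mem_top b)
    exact hS b x
  · exact iSup_le fun i => Subgroup.closure_mono (by rintro _ ⟨x, rfl⟩; exact ⟨a i, x, rfl⟩)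
end

section
/- Let A be an elementary abelian 3-group of rank r+1, and let b be the automorphism of A inverting every element. In the semidirect product G = A ⋊ ⟨b⟩, the minimal Engel sink E(b) of the element b generates the whole subgroup A, which has rank r+1. -/
/-! For `a ∈ A` we have `[a, b] = a⁻¹ aᵇ = a⁻² = a` because `A` has exponent 3, so `x ↦ [x, b]`
fixes `A` pointwise; and it maps all of `G` into `A` because `G / A ≅ ⟨b⟩` is abelian. Hence the
commutators `[x, b, …, b]` of any positive length take exactly the values in `A`, i.e. `E(b) = A`.
Subgroups of `A ≅ 𝔽₃^(r+1)` are its `𝔽₃`-subspaces: each is generated by a basis, and any generating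
set of `A` spans it, so the rank of `A` is its dimension `r + 1`. -/

/-- Left-normed iterated commutator `[x, g, g, …, g]` (with `g` repeated `n` times),
where `[x, g] = x⁻¹ g⁻¹ x g`. -/
def engel {G : Type*} [Group G] (g : G) : ℕ → G → G
  | 0, x => x
  | n + 1, x => (engel g n x)⁻¹ * g⁻¹ * engel g n x * g

/-- The minimal Engel sink of `g` in a finite group: the set of values attained by
`[x, g, …, g]` for arbitrarily large lengths. -/
def engelSink {G : Type*} [Group G] (g : G) : Set G :=
  {y | ∀ N : ℕ, ∃ n, N ≤ n ∧ ∃ x : G, engel g n x = y}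

/-- `G` has rank at most `s`: every subgroup is generated by at most `s` elements. -/
def rankAtMost (G : Type*) [Group G] (s : ℕ) : Prop :=
  ∀ H : Subgroup G, ∃ S : Finset G, S.card ≤ s ∧ Subgroup.closure (S : Set G) = H

/-- The elementary abelian `3`-group of rank `r+1`, written multiplicatively. -/
abbrev elemAb3 (r : ℕ) : Type := Multiplicative (Fin (r + 1) → ZMod 3)

section Engel

variable {G : Type*} [Group G]

theorem engel_succ' (g : G) (n : ℕ) (x : G) :
    engel g (n + 1) x = engel g n (engel g 1 x) := by
  induction n with
  | zero => rfl
  | succ n ih => rw [engel, ih]; rfl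

theorem engel_eq_self_of_engel_one_eq {g y : G} (hy : engel g 1 y = y) (n : ℕ) :
    engel g n y = y := by
  induction n with
  | zero => rfl
  | succ n ih => rw [engel_succ', hy, ih]

theorem engelSink_eq_of_engel_one {g : G} {S : Set G} (hmaps : ∀ x, engel g 1 x ∈ S)
    (hfix : ∀ y ∈ S, engel g 1 y = y) : engelSink g = S := by
  ext y
  constructor
  · intro hy
    obtain ⟨n, hn, x, rfl⟩ := hy 1
    obtain ⟨m, rfl⟩ := Nat.exists_eq_add_of_le' hn
    rw [engel_succ', engel_eq_self_of_engel_one_eq (hfix _ (hmaps x))]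
    exact hmaps x
  · exact fun hy N => ⟨N, le_rfl, y, engel_eq_self_of_engel_one_eq (hfix y hy) N⟩

end Engel

namespace SemidirectProduct

variable {N H : Type*} [Group N] [Group H] {φ : H →* MulAut N}

theorem engel_one_inr_mem_range_inl {h : H} {x : N ⋊[φ] H} (hx : Commute x.right h) :
    engel (inr h) 1 x ∈ (inl : N →* N ⋊[φ] H).range := by
  rw [range_inl_eq_ker_rightHom, MonoidHom.mem_ker]
  simp only [engel, map_mul, map_inv, rightHom_eq_right, right_inr]
  rw [mul_assoc x.right⁻¹, ← hx.inv_right.eq]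
  group

theorem engel_one_inr_inl (h : H) (a : N) :
    engel (inr h) 1 (inl a : N ⋊[φ] H) = inl (a⁻¹ * (φ h)⁻¹ a) := by
  rw [map_mul, map_inv, inl_aut_inv]
  simp only [engel, map_inv]
  group

theorem engelSink_inr_eq_range_inl {h : H} (hcomm : ∀ k : H, Commute k h)
    (hfix : ∀ a : N, a⁻¹ * (φ h)⁻¹ a = a) :
    engelSink (inr h : N ⋊[φ] H) = (inl : N →* N ⋊[φ] H).range := by
  refine engelSink_eq_of_engel_one (fun x => engel_one_inr_mem_range_inl (hcomm x.right)) ?_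
  rintro _ ⟨a, rfl⟩
  rw [engel_one_inr_inl, hfix]

end SemidirectProduct

theorem inv_mul_inv_self_of_pow_three_eq_one {M : Type*} [Group M] {a : M} (ha : a ^ 3 = 1) :
    a⁻¹ * a⁻¹ = a := by
  rw [← mul_inv_rev, inv_eq_iff_mul_eq_one, ← ha, pow_three, mul_assoc]

open Module

section Rank

theorem AddSubgroup.toZModSubmodule_closure {n : ℕ} {M : Type*} [AddCommGroup M]
    [Module (ZMod n) M] (s : Set M) :
    toZModSubmodule n (closure s) = Submodule.span (ZMod n) s :=
  le_antisymm ((closure_le (Submodule.span (ZMod n) s).toAddSubgroup).2 Submodule.subset_span)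
    (Submodule.span_le.2 subset_closure)

theorem Subgroup.closure_eq_iff_span_eq {n : ℕ} {M : Type*} [AddCommGroup M]
    [Module (ZMod n) M] (S : Set (Multiplicative M)) (H : Subgroup (Multiplicative M)) :
    closure S = H ↔
      Submodule.span (ZMod n) (Multiplicative.ofAdd ⁻¹' S) =
        AddSubgroup.toZModSubmodule n H.toAddSubgroup' := by
  rw [← AddSubgroup.toZModSubmodule_closure, ← toAddSubgroup'_closure,
    (AddSubgroup.toZModSubmodule n).injective.eq_iff, toAddSubgroup'.injective.eq_iff]

theorem finrank_le_card_of_span_eq_top {R M : Type*} [Ring R] [StrongRankCondition R]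
    [AddCommGroup M] [Module R M] {T : Finset M} (hT : Submodule.span R (T : Set M) = ⊤) :
    finrank R M ≤ T.card := by
  simpa using finrank_le_of_span_eq_top (v := ((↑) : T → M)) (by simpa using hT)

variable {K V : Type*} [Field K] [AddCommGroup V] [Module K V] [FiniteDimensional K V]

theorem Submodule.exists_finset_card_le_finrank_span_eq (P : Submodule K V) :
    ∃ T : Finset V, T.card ≤ finrank K V ∧ Submodule.span K (T : Set V) = P := by
  classical
  let b := finBasis K P
  refine ⟨Finset.univ.image fun i => (b i : V), ?_, ?_⟩
  · calc _ ≤ finrank K P := Finset.card_image_le.trans (by simp)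
      _ ≤ finrank K V := P.finrank_le
  · rw [Finset.coe_image, Finset.coe_univ, Set.image_univ, Set.range_comp', ← P.coe_subtype,
      Submodule.span_image, b.span_eq, Submodule.map_subtype_top]

end Rank

section MultiplicativeRank

variable {p : ℕ} [Fact p.Prime] {V : Type*} [AddCommGroup V] [Module (ZMod p) V]

theorem rankAtMost_multiplicative_finrank [FiniteDimensional (ZMod p) V] :
    rankAtMost (Multiplicative V) (finrank (ZMod p) V) := by
  intro H
  obtain ⟨T, hcard, hspan⟩ :=
    (AddSubgroup.toZModSubmodule p H.toAddSubgroup').exists_finset_card_le_finrank_span_eq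
  refine ⟨T.map Multiplicative.ofAdd.toEmbedding, by simpa using hcard, ?_⟩
  rw [Subgroup.closure_eq_iff_span_eq (n := p)]
  simpa using hspan

theorem finrank_le_of_rankAtMost_multiplicative {s : ℕ}
    (hs : rankAtMost (Multiplicative V) s) : finrank (ZMod p) V ≤ s := by
  obtain ⟨S, hcard, hS⟩ := hs ⊤
  rw [Subgroup.closure_eq_iff_span_eq (n := p)] at hS
  refine le_trans (finrank_le_card_of_span_eq_top (T := S.map Multiplicative.toAdd.toEmbedding) ?_)
    (by simpa using hcard)
  simpa [Equiv.image_eq_preimage_symm] using hS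

end MultiplicativeRank

theorem elemAb3_pow_three {r : ℕ} (a : elemAb3 r) : a ^ 3 = 1 :=
  ZModModule.char_nsmul_eq_zero 3 a.toAdd

/-- In the semidirect product `A ⋊ ⟨b⟩`, where `A` is elementary abelian of exponent 3
and rank `r+1` and `b` is the inverting automorphism, the minimal Engel sink of `b`
generates the whole of `A`, which has rank exactly `r+1`. -/
theorem stmt14 (r : ℕ) :
    (Subgroup.closure
        (engelSink
          (SemidirectProduct.inr
              ⟨MulEquiv.inv (elemAb3 r), Subgroup.mem_zpowers _⟩ :
            elemAb3 r ⋊[(Subgroup.zpowers (MulEquiv.inv (elemAb3 r))).subtype]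
              ↥(Subgroup.zpowers (MulEquiv.inv (elemAb3 r))))) =
      (SemidirectProduct.inl :
        elemAb3 r →*
          elemAb3 r ⋊[(Subgroup.zpowers (MulEquiv.inv (elemAb3 r))).subtype]
            ↥(Subgroup.zpowers (MulEquiv.inv (elemAb3 r)))).range) ∧
      rankAtMost (elemAb3 r) (r + 1) ∧
      ∀ s : ℕ, rankAtMost (elemAb3 r) s → r + 1 ≤ s := by
  have hdim : finrank (ZMod 3) (Fin (r + 1) → ZMod 3) = r + 1 :=
    finrank_fin_fun (ZMod 3)
  refine ⟨?_, ?_, fun s hs => ?_⟩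
  · rw [SemidirectProduct.engelSink_inr_eq_range_inl (fun k => Std.Commutative.comm k _)
      (fun a => ?_), Subgroup.closure_eq]
    simpa using inv_mul_inv_self_of_pow_three_eq_one (elemAb3_pow_three a)
  · simpa only [hdim] using
      rankAtMost_multiplicative_finrank (p := 3) (V := Fin (r + 1) → ZMod 3)
  · simpa only [hdim] using finrank_le_of_rankAtMost_multiplicative (p := 3) hs
end
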